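/- Suppose P : ℝ → ℝ^{n×n} satisfies the backward Lyapunov ODE on [0,T] and P(t) is symmetric positive semidefinite for every t ∈ [0,T]. If Ψ(t) ≺ 0 for all t ∈ [0,T], then Γ(t) ≺ 0 for all t ∈ [0,T]. -/

import Mathlib

/-
Ψ(t) ≺ 0 forces its leading principal 2n×2n block (the coordinates of the first two block rows)
to be ≺ 0. Since P(t) is symmetric, that block equals Γ(t) + Δ with
Δ = diag(2α·P(t), 2α·Q + h²e^{2αh}·UᵀWU) + γκ²·[[I, I], [I, I]],
which is positive semidefinite because α, γ ≥ 0 and P(t), Q, W ⪰ 0. Hence Γ(t) ≺ 0.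
-/

open Matrix

noncomputable section

attribute [local instance] Matrix.normedAddCommGroup Matrix.normedSpace

/-- Spectral norm (ℓ²-operator norm) of a square real matrix. -/
noncomputable def sNorm {ι : Type*} [Fintype ι] [DecidableEq ι] (M : Matrix ι ι ℝ) : ℝ :=
  ‖Matrix.toEuclideanCLM (𝕜 := ℝ) M‖

/-- `S ≺ 0`: the quadratic form of `S` is negative on every nonzero vector. -/
def NegDef {ι : Type*} [Fintype ι] (S : Matrix ι ι ℝ) : Prop :=
  ∀ x : ι → ℝ, x ≠ 0 → x ⬝ᵥ S.mulVec x < 0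

/-- The 4n×4n symmetric block matrix Ψ from the paper (eq. (10)), as a function of
the tuning parameters and of the value `Pt = P(t)`. -/
noncomputable def Psi {n m : ℕ}
    (A : Matrix (Fin n) (Fin n) ℝ) (D : Matrix (Fin m) (Fin n) ℝ)
    (L : Matrix (Fin n) (Fin m) ℝ) (Q W : Matrix (Fin n) (Fin n) ℝ)
    (ζ α h γ κ : ℝ) (Pt : Matrix (Fin n) (Fin n) ℝ) :
    Matrix (Fin 4 × Fin n) (Fin 4 × Fin n) ℝ :=
  let U := A - L * D
  let c := h ^ 2 * Real.exp (2 * α * h)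
  let Ψ11 := (-(2 * (ζ - α))) • Pt + (γ * κ ^ 2) • (1 : Matrix (Fin n) (Fin n) ℝ)
  let Ψ12 := Pt * L * D + (γ * κ ^ 2) • (1 : Matrix (Fin n) (Fin n) ℝ)
  let Ψ13 := -(Pt * L * D)
  let Ψ14 : Matrix (Fin n) (Fin n) ℝ := 0
  let Ψ22 := Uᵀ * Q + Q * U + (2 * α) • Q + (γ * κ ^ 2) • (1 : Matrix (Fin n) (Fin n) ℝ)
      + c • (Uᵀ * W * U)
  let Ψ23 := Q * L * D + c • (Uᵀ * W * L * D)
  let Ψ24 := Q + c • (Uᵀ * W)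
  let Ψ33 := (-(Real.pi ^ 2 / 4)) • W + c • (Dᵀ * Lᵀ * W * L * D)
  let Ψ34 := c • (Dᵀ * Lᵀ * W)
  let Ψ44 := (-γ) • (1 : Matrix (Fin n) (Fin n) ℝ) + c • W
  fun q r =>
    (!![Ψ11, Ψ12, Ψ13, Ψ14;
        Ψ12ᵀ, Ψ22, Ψ23, Ψ24;
        Ψ13ᵀ, Ψ23ᵀ, Ψ33, Ψ34;
        Ψ14ᵀ, Ψ24ᵀ, Ψ34ᵀ, Ψ44] q.1 r.1) q.2 r.2

/-- The 2n×2n block matrix Γ from the paper (eq. (15)). -/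
noncomputable def Gam {n m : ℕ}
    (ζ : ℝ) (A : Matrix (Fin n) (Fin n) ℝ) (D : Matrix (Fin m) (Fin n) ℝ)
    (L : Matrix (Fin n) (Fin m) ℝ) (Q : Matrix (Fin n) (Fin n) ℝ)
    (Pt : Matrix (Fin n) (Fin n) ℝ) : Matrix (Fin n ⊕ Fin n) (Fin n ⊕ Fin n) ℝ :=
  Matrix.fromBlocks ((-(2 * ζ)) • Pt) (Pt * L * D) (Dᵀ * Lᵀ * Pt)
    ((A - L * D)ᵀ * Q + Q * (A - L * D))

theorem NegDef.submatrix {ι κ : Type*} [Fintype ι] [Fintype κ] {S : Matrix ι ι ℝ} (hS : NegDef S)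
    {e : κ → ι} (he : Function.Injective e) : NegDef (S.submatrix e e) := by
  intro v hv
  set w := Function.extend e v 0
  have hwe : ∀ k, w (e k) = v k := he.extend_apply v 0
  have hw0 : ∀ i ∉ Set.range e, w i = 0 := fun i hi =>
    Function.extend_apply' _ _ _ (by simpa using hi)
  have hw : w ≠ 0 := fun h => hv (funext fun k => by rw [← hwe, h]; rfl)
  have key : v ⬝ᵥ S.submatrix e e *ᵥ v = w ⬝ᵥ S *ᵥ w := by
    simp only [dotProduct, mulVec]
    refine Fintype.sum_of_injective e he _ _ (fun i hi => by simp [hw0 i hi]) fun k => ?_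
    rw [hwe]
    congr 1
    exact Fintype.sum_of_injective e he _ _ (fun j hj => by simp [hw0 j hj]) fun l => by
      simp [hwe]
  exact key ▸ hS w hw

theorem NegDef.of_add_posSemidef {ι : Type*} [Fintype ι] {S R : Matrix ι ι ℝ}
    (hSR : NegDef (S + R)) (hR : R.PosSemidef) : NegDef S := fun v hv => by
  have hSRv := hSR v hv
  rw [add_mulVec, dotProduct_add] at hSRv
  have hRv := hR.dotProduct_mulVec_nonneg v
  rw [star_trivial] at hRv
  linarith

namespace Matrix
variable {l m R : Type*} [Fintype l] [Fintype m] [Ring R] [PartialOrder R] [StarRing R]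

theorem PosSemidef.fromBlocks_zero_zero [AddLeftMono R] {A : Matrix l l R} {D : Matrix m m R}
    (hA : A.PosSemidef) (hD : D.PosSemidef) : (fromBlocks A 0 0 D).PosSemidef := by
  refine .of_dotProduct_mulVec_nonneg (hA.1.fromBlocks (by simp) hD.1) fun x => ?_
  rw [fromBlocks_mulVec, ← Sum.elim_comp_inl_inr (star x), sumElim_dotProduct_sumElim]
  simp only [zero_mulVec, add_zero, zero_add]
  exact add_nonneg (hA.dotProduct_mulVec_nonneg (x ∘ Sum.inl))
    (hD.dotProduct_mulVec_nonneg (x ∘ Sum.inr))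

theorem posSemidef_fromBlocks_one_one [StarOrderedRing R] [DecidableEq l] :
    (fromBlocks 1 1 1 1 : Matrix (l ⊕ l) (l ⊕ l) R).PosSemidef := by
  have := posSemidef_conjTranspose_mul_self (fromCols (1 : Matrix l l R) (1 : Matrix l l R))
  simpa [conjTranspose_fromCols_eq_fromRows_conjTranspose, fromRows_mul_fromCols] using this
end Matrix

def leadingBlocks (n : ℕ) : Fin n ⊕ Fin n → Fin 4 × Fin n :=
  Sum.elim ((0, ·)) ((1, ·))

theorem leadingBlocks_injective {n : ℕ} : Function.Injective (leadingBlocks n) := by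
  rintro (i | i) (j | j) hij <;> simp_all [leadingBlocks]

section
variable {n m : ℕ} (A : Matrix (Fin n) (Fin n) ℝ) (D : Matrix (Fin m) (Fin n) ℝ)
  (L : Matrix (Fin n) (Fin m) ℝ) (Q W Pt : Matrix (Fin n) (Fin n) ℝ) (ζ α h γ κ : ℝ)

def psiGamGap : Matrix (Fin n ⊕ Fin n) (Fin n ⊕ Fin n) ℝ :=
  fromBlocks ((2 * α) • Pt) 0 0
      ((2 * α) • Q + (h ^ 2 * Real.exp (2 * α * h)) • ((A - L * D)ᵀ * W * (A - L * D))) +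
    (γ * κ ^ 2) • fromBlocks 1 1 1 1

variable {A D L Q W Pt ζ α h γ κ}

theorem Psi_submatrix_leadingBlocks (hPt : Pt.IsSymm) :
    (Psi A D L Q W ζ α h γ κ Pt).submatrix (leadingBlocks n) (leadingBlocks n) =
      Gam ζ A D L Q Pt + psiGamGap A D L Q W Pt α h γ κ := by
  have hblocks : (Psi A D L Q W ζ α h γ κ Pt).submatrix (leadingBlocks n) (leadingBlocks n) =
      fromBlocks ((-(2 * (ζ - α))) • Pt + (γ * κ ^ 2) • 1) (Pt * L * D + (γ * κ ^ 2) • 1)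
        (Pt * L * D + (γ * κ ^ 2) • 1)ᵀ
        ((A - L * D)ᵀ * Q + Q * (A - L * D) + (2 * α) • Q + (γ * κ ^ 2) • 1 +
          (h ^ 2 * Real.exp (2 * α * h)) • ((A - L * D)ᵀ * W * (A - L * D))) := by
    ext (i | i) (j | j) <;> rfl
  rw [hblocks, Gam, psiGamGap, fromBlocks_smul, fromBlocks_add, fromBlocks_add, fromBlocks_inj]
  refine ⟨by module, by simp, ?_, by abel⟩
  simp [transpose_add, transpose_mul, hPt.eq, Matrix.mul_assoc]

theorem psiGamGap_posSemidef (hα : 0 ≤ α) (hγ : 0 ≤ γ)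
    (hPt : Pt.PosSemidef) (hQ : Q.PosSemidef) (hW : W.PosSemidef) :
    (psiGamGap A D L Q W Pt α h γ κ).PosSemidef := by
  have h2α : (0 : ℝ) ≤ 2 * α := by positivity
  have hWU := hW.conjTranspose_mul_mul_same (A - L * D)
  rw [conjTranspose_eq_transpose_of_trivial] at hWU
  refine .add (.fromBlocks_zero_zero (hPt.smul h2α) ((hQ.smul h2α).add (hWU.smul ?_)))
    (posSemidef_fromBlocks_one_one.smul (by positivity))
  positivity

end

theorem stmt7_general {n m : ℕ} (T ζ : ℝ) (A : Matrix (Fin n) (Fin n) ℝ)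
    (D : Matrix (Fin m) (Fin n) ℝ) (L : Matrix (Fin n) (Fin m) ℝ)
    (α h γ κ : ℝ) (hα0 : 0 ≤ α) (hγ : 0 < γ)
    (Q W : Matrix (Fin n) (Fin n) ℝ) (hQ : Q.PosDef) (hW : W.PosDef)
    (P : ℝ → Matrix (Fin n) (Fin n) ℝ)
    (hPsd : ∀ t ∈ Set.Icc (0:ℝ) T, (P t).PosSemidef)
    (hΨ : ∀ t ∈ Set.Icc (0:ℝ) T, NegDef (Psi A D L Q W ζ α h γ κ (P t))) :
    ∀ t ∈ Set.Icc (0:ℝ) T, NegDef (Gam ζ A D L Q (P t)) := by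
  intro t ht
  have hPt := hPsd t ht
  have hΨlead := (hΨ t ht).submatrix leadingBlocks_injective
  rw [Psi_submatrix_leadingBlocks (isHermitian_iff_isSymm.mp hPt.isHermitian)] at hΨlead
  exact hΨlead.of_add_posSemidef (psiGamGap_posSemidef hα0 hγ.le hPt hQ.posSemidef hW.posSemidef)

/-- Proposition 2 of the paper: feasibility of Ψ(t) ≺ 0 on [0,T] implies Γ(t) ≺ 0 on [0,T]. -/
theorem stmt7 {n p m : ℕ} (hn : 1 ≤ n) (hp : 1 ≤ p) (hm : 1 ≤ m)
    (T ζ : ℝ) (hT : 0 < T) (hζ : 0 < ζ)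
    (A : Matrix (Fin n) (Fin n) ℝ) (C : Matrix (Fin p) (Fin n) ℝ)
    (X : Matrix (Fin n) (Fin n) ℝ) (hX : X.PosDef)
    (D : Matrix (Fin m) (Fin n) ℝ) (L : Matrix (Fin n) (Fin m) ℝ)
    (α h γ κ : ℝ) (hα0 : 0 ≤ α) (hαζ : α < ζ) (hh : 0 < h) (hγ : 0 < γ) (hκ : 0 < κ)
    (Q W : Matrix (Fin n) (Fin n) ℝ) (hQ : Q.PosDef) (hW : W.PosDef)
    (P : ℝ → Matrix (Fin n) (Fin n) ℝ)
    (hP : ∀ t ∈ Set.Icc (0:ℝ) T,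
        HasDerivAt P (-(Aᵀ * P t + P t * A + Cᵀ * C + (2 * ζ) • P t)) t)
    (hPT : P T = X)
    (hPsd : ∀ t ∈ Set.Icc (0:ℝ) T, (P t).PosSemidef)
    (hΨ : ∀ t ∈ Set.Icc (0:ℝ) T, NegDef (Psi A D L Q W ζ α h γ κ (P t))) :
    ∀ t ∈ Set.Icc (0:ℝ) T, NegDef (Gam ζ A D L Q (P t)) :=
  stmt7_general T ζ A D L α h γ κ hα0 hγ Q W hQ hW P hPsd hΨ
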